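/- arXiv:1504.05931 — 7 statements merged into one kernel-verified Lean document; each statement's English description precedes it below -/
import Mathlib

section
/- Let Y_1, …, Y_K (K ≥ 2) be random variables taking values in finite sets, with a given joint distribution. For indices define the cyclic shift ⟨i⟩ = i if i ≤ K and ⟨i⟩ = i − K if i > K. Then for every s ∈ {1, …, K−1}, (1/s)·Σ_{i=1}^{K} H(Y_i, Y_{⟨i+1⟩}, …, Y_{⟨i+s−1⟩}) ≥ (1/(s+1))·Σ_{i=1}^{K} H(Y_i, Y_{⟨i+1⟩}, …, Y_{⟨i+s⟩}) (the sliding-window subset entropy inequality). -/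
/-- Shannon entropy of the random variable `f` defined on a finite outcome space `Ω`
equipped with the probability mass function `p` (with `p ≥ 0` and `∑ p = 1`).
This is `H(f) = ∑_b (−q(b) log q(b))` where `q(b) = P[f = b]` is the distribution of `f`. -/
noncomputable def entropyOf {Ω β : Type*} [Fintype Ω] [Fintype β] [DecidableEq β]
    (p : Ω → ℝ) (f : Ω → β) : ℝ :=
  ∑ b : β, Real.negMulLog (∑ ω ∈ Finset.univ.filter (fun ω => f ω = b), p ω)


open Finset Real

section aux
variable {Ω β γ δ : Type*} [Fintype Ω] [Fintype β] [Fintype γ] [Fintype δ]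
  [DecidableEq β] [DecidableEq γ] [DecidableEq δ]

lemma entropyOf_congr (p : Ω → ℝ) (f : Ω → β) (g : Ω → γ)
    (hfg : ∀ ω ω', f ω = f ω' ↔ g ω = g ω') :
    entropyOf p f = entropyOf p g := by
  classical
  rcases isEmpty_or_nonempty Ω with hΩ | hΩ
  · simp [entropyOf, Finset.univ_eq_empty (α := Ω)]
  have h1 : entropyOf p f = ∑ b ∈ univ.image f,
      Real.negMulLog (∑ ω ∈ univ.filter (fun ω => f ω = b), p ω) := by
    rw [entropyOf]
    refine (Finset.sum_subset (subset_univ _) ?_).symm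
    intro b _ hb
    have : univ.filter (fun ω => f ω = b) = ∅ := by
      rw [Finset.filter_eq_empty_iff]
      intro ω _
      exact fun h => hb (Finset.mem_image.mpr ⟨ω, mem_univ _, h⟩)
    simp [this]
  have h2 : entropyOf p g = ∑ c ∈ univ.image g,
      Real.negMulLog (∑ ω ∈ univ.filter (fun ω => g ω = c), p ω) := by
    rw [entropyOf]
    refine (Finset.sum_subset (subset_univ _) ?_).symm
    intro c _ hc
    have : univ.filter (fun ω => g ω = c) = ∅ := by
      rw [Finset.filter_eq_empty_iff]
      intro ω _
      exact fun h => hc (Finset.mem_image.mpr ⟨ω, mem_univ _, h⟩)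
    simp [this]
  set e : β → γ := fun b => if h : ∃ ω, f ω = b then g h.choose else g (Classical.arbitrary Ω)
    with he
  have key : ∀ ω, e (f ω) = g ω := by
    intro ω
    have h : ∃ ω', f ω' = f ω := ⟨ω, rfl⟩
    rw [he]
    simp only [dif_pos h]
    exact (hfg h.choose ω).mp h.choose_spec
  have himg : univ.image g = (univ.image f).image e := by
    rw [Finset.image_image]
    refine Finset.image_congr ?_
    intro ω _
    exact (key ω).symm
  have hinj : ∀ b ∈ univ.image f, ∀ b' ∈ univ.image f, e b = e b' → b = b' := by
    intro b hb b' hb' heq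
    obtain ⟨ω, -, rfl⟩ := Finset.mem_image.mp hb
    obtain ⟨ω', -, rfl⟩ := Finset.mem_image.mp hb'
    rw [key ω, key ω'] at heq
    exact (hfg ω ω').mpr heq
  rw [h1, h2, himg, Finset.sum_image hinj]
  refine Finset.sum_congr rfl ?_
  intro b hb
  obtain ⟨ω, -, rfl⟩ := Finset.mem_image.mp hb
  rw [key ω]
  congr 1
  refine Finset.sum_congr ?_ (fun _ _ => rfl)
  ext ω'
  simp only [mem_filter, mem_univ, true_and]
  exact hfg ω' ω


lemma entropyOf_subsingleton [Subsingleton β] (p : Ω → ℝ) (hptot : ∑ ω, p ω = 1)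
    (f : Ω → β) : entropyOf p f = 0 := by
  rcases isEmpty_or_nonempty β with h | h
  · simp [entropyOf]
  · obtain ⟨b0⟩ := h
    have : (univ : Finset β) = {b0} := by
      ext b; simp [Subsingleton.elim b b0]
    rw [entropyOf, this, Finset.sum_singleton]
    have : univ.filter (fun ω => f ω = b0) = univ := by
      ext ω; simp [Subsingleton.elim (f ω) b0]
    rw [this, hptot]
    simp


lemma core_submodular (P : β × γ × δ → ℝ) (hPnn : ∀ x, 0 ≤ P x)
    (hPsum : ∑ x, P x = 1) :
    ∑ x : β × γ × δ, negMulLog (P x) +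
        ∑ b : γ, negMulLog (∑ a : β, ∑ c : δ, P (a, b, c)) ≤
      (∑ a : β, ∑ b : γ, negMulLog (∑ c : δ, P (a, b, c))) +
        ∑ b : γ, ∑ c : δ, negMulLog (∑ a : β, P (a, b, c)) := by
  classical
  set A : β → γ → ℝ := fun a b => ∑ c, P (a, b, c) with hA
  set C : γ → δ → ℝ := fun b c => ∑ a, P (a, b, c) with hC
  set B : γ → ℝ := fun b => ∑ a, ∑ c, P (a, b, c) with hB
  have hAnn : ∀ a b, 0 ≤ A a b := fun a b => Finset.sum_nonneg fun c _ => hPnn _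
  have hCnn : ∀ b c, 0 ≤ C b c := fun b c => Finset.sum_nonneg fun a _ => hPnn _
  have hBnn : ∀ b, 0 ≤ B b := fun b =>
    Finset.sum_nonneg fun a _ => Finset.sum_nonneg fun c _ => hPnn _
  have reorder : ∀ F : β → γ → δ → ℝ,
      ∑ b : γ, ∑ c : δ, ∑ a : β, F a b c = ∑ a : β, ∑ b : γ, ∑ c : δ, F a b c := by
    intro F
    rw [show (∑ b : γ, ∑ c : δ, ∑ a : β, F a b c)
        = ∑ b : γ, ∑ a : β, ∑ c : δ, F a b c from
      Finset.sum_congr rfl fun b _ => Finset.sum_comm]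
    exact Finset.sum_comm
  have hPsum' : ∑ a : β, ∑ b : γ, ∑ c : δ, P (a, b, c) = 1 := by
    rw [← hPsum, Fintype.sum_prod_type]
    exact Finset.sum_congr rfl fun a _ => by rw [Fintype.sum_prod_type]
  have hsumC : ∀ b, ∑ c, C b c = B b := by
    intro b
    rw [hB, hC]
    exact Finset.sum_comm
  -- the correction term
  set R : β → γ → δ → ℝ := fun a b c =>
    if B b = 0 then 0 else A a b * C b c / B b with hR
  have hRnn : ∀ a b c, 0 ≤ R a b c := by
    intro a b c
    rw [hR]
    dsimp only
    split
    · exact le_refl 0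
    · exact div_nonneg (mul_nonneg (hAnn a b) (hCnn b c)) (hBnn b)
  have hRsum : ∑ a : β, ∑ b : γ, ∑ c : δ, R a b c = 1 := by
    rw [← Finset.sum_comm (f := fun b a => ∑ c : δ, R a b c)]
    rw [show (∑ b : γ, ∑ a : β, ∑ c : δ, R a b c) = ∑ b : γ, B b from ?_]
    · rw [← hPsum']
      exact Finset.sum_comm
    refine Finset.sum_congr rfl fun b _ => ?_
    by_cases hb : B b = 0
    · have : ∀ a c, R a b c = 0 := by intro a c; simp [hR, hb]
      simp only [this, Finset.sum_const_zero]
      exact hb.symm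
    · have : ∀ a, ∑ c, R a b c = A a b * B b / B b := by
        intro a
        have : ∀ c, R a b c = A a b * C b c / B b := fun c => by rw [hR]; simp [hb]
        rw [Finset.sum_congr rfl fun c _ => this c, ← Finset.sum_div, ← Finset.mul_sum,
          hsumC]
      rw [Finset.sum_congr rfl fun a _ => this a, ← Finset.sum_div, ← Finset.sum_mul]
      rw [show (∑ a, A a b) = B b from rfl]
      field_simp
  -- expand the four entropy sums into triple sums
  have expandP : ∑ x : β × γ × δ, negMulLog (P x)
      = ∑ a : β, ∑ b : γ, ∑ c : δ, -(P (a, b, c) * log (P (a, b, c))) := by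
    rw [Fintype.sum_prod_type]
    refine Finset.sum_congr rfl fun a _ => ?_
    rw [Fintype.sum_prod_type]
    exact Finset.sum_congr rfl fun b _ => Finset.sum_congr rfl fun c _ => by
      rw [negMulLog, neg_mul]
  have expandA : ∀ a b, negMulLog (A a b) = ∑ c : δ, -(P (a, b, c) * log (A a b)) := by
    intro a b
    rw [negMulLog, neg_mul]
    calc -((∑ c, P (a, b, c)) * log (A a b))
        = -(∑ c, P (a, b, c) * log (A a b)) := by rw [Finset.sum_mul]
      _ = ∑ c, -(P (a, b, c) * log (A a b)) := by rw [← Finset.sum_neg_distrib]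
  have expandC : ∀ b c, negMulLog (C b c) = ∑ a : β, -(P (a, b, c) * log (C b c)) := by
    intro b c
    rw [negMulLog, neg_mul]
    calc -((∑ a, P (a, b, c)) * log (C b c))
        = -(∑ a, P (a, b, c) * log (C b c)) := by rw [Finset.sum_mul]
      _ = ∑ a, -(P (a, b, c) * log (C b c)) := by rw [← Finset.sum_neg_distrib]
  have expandB : ∀ b, negMulLog (B b) = ∑ a : β, ∑ c : δ, -(P (a, b, c) * log (B b)) := by
    intro b
    rw [negMulLog, neg_mul]
    calc -((∑ a, ∑ c, P (a, b, c)) * log (B b))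
        = -(∑ a, (∑ c, P (a, b, c)) * log (B b)) := by rw [Finset.sum_mul]
      _ = -(∑ a, ∑ c, P (a, b, c) * log (B b)) := by
          congr 1
          exact Finset.sum_congr rfl fun a _ => Finset.sum_mul _ _ _
      _ = ∑ a, -(∑ c, P (a, b, c) * log (B b)) := by rw [← Finset.sum_neg_distrib]
      _ = ∑ a, ∑ c, -(P (a, b, c) * log (B b)) := by
          exact Finset.sum_congr rfl fun a _ => by rw [← Finset.sum_neg_distrib]
  -- per-term bound
  have per : ∀ a b c, P (a, b, c) - R a b c ≤
      P (a, b, c) * (log (P (a, b, c)) + log (B b) - log (A a b) - log (C b c)) := by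
    intro a b c
    rcases (hPnn (a, b, c)).eq_or_lt with h0 | h0
    · rw [← h0]
      simp only [zero_sub, zero_mul, neg_nonpos]
      exact hRnn a b c
    · have hPA : P (a, b, c) ≤ A a b :=
        Finset.single_le_sum (f := fun c => P (a, b, c)) (fun c _ => hPnn _) (mem_univ c)
      have hPC : P (a, b, c) ≤ C b c :=
        Finset.single_le_sum (f := fun a => P (a, b, c)) (fun a _ => hPnn _) (mem_univ a)
      have hAB : A a b ≤ B b :=
        Finset.single_le_sum (f := fun a' => ∑ c', P (a', b, c'))
          (fun a' _ => Finset.sum_nonneg fun c' _ => hPnn _) (mem_univ a)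
      have hA0 : 0 < A a b := lt_of_lt_of_le h0 hPA
      have hC0 : 0 < C b c := lt_of_lt_of_le h0 hPC
      have hB0 : 0 < B b := lt_of_lt_of_le hA0 hAB
      rw [hR]
      dsimp only
      rw [if_neg hB0.ne']
      set q := A a b * C b c / (P (a, b, c) * B b) with hq
      have hq0 : 0 < q := by positivity
      have hlog := Real.log_le_sub_one_of_pos hq0
      have hx1 : (0 : ℝ) < A a b * C b c := by positivity
      have hx2 : (0 : ℝ) < P (a, b, c) * B b := by positivity
      have hlogq : log q = log (A a b) + log (C b c) - log (P (a, b, c)) - log (B b) := by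
        rw [hq, Real.log_div hx1.ne' hx2.ne',
          Real.log_mul hA0.ne' hC0.ne', Real.log_mul h0.ne' hB0.ne']
        ring
      have hPq : P (a, b, c) * q = A a b * C b c / B b := by
        rw [hq]
        field_simp
      have h1 : P (a, b, c) * log q ≤ P (a, b, c) * q - P (a, b, c) := by
        nlinarith [mul_le_mul_of_nonneg_left hlog h0.le]
      have h2 : P (a, b, c) * (log (P (a, b, c)) + log (B b) - log (A a b) - log (C b c))
          = -(P (a, b, c) * log q) := by
        rw [hlogq]
        ring
      rw [h2]
      linarith
  -- total
  have h0T : (0 : ℝ) ≤ ∑ a : β, ∑ b : γ, ∑ c : δ,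
      P (a, b, c) * (log (P (a, b, c)) + log (B b) - log (A a b) - log (C b c)) := by
    have hle : ∑ a : β, ∑ b : γ, ∑ c : δ, (P (a, b, c) - R a b c) ≤ ∑ a : β, ∑ b : γ, ∑ c : δ,
        P (a, b, c) * (log (P (a, b, c)) + log (B b) - log (A a b) - log (C b c)) := by
      refine Finset.sum_le_sum fun a _ => Finset.sum_le_sum fun b _ =>
        Finset.sum_le_sum fun c _ => per a b c
    refine le_trans (le_of_eq ?_) hle
    have : ∑ a : β, ∑ b : γ, ∑ c : δ, (P (a, b, c) - R a b c)
        = (∑ a : β, ∑ b : γ, ∑ c : δ, P (a, b, c)) - ∑ a : β, ∑ b : γ, ∑ c : δ, R a b c := by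
      simp only [Finset.sum_sub_distrib]
    rw [this, hPsum', hRsum]
    norm_num
  -- assemble
  rw [← sub_nonneg]
  rw [expandP]
  rw [show (∑ b : γ, negMulLog (∑ a : β, ∑ c : δ, P (a, b, c)))
      = ∑ a : β, ∑ b : γ, ∑ c : δ, -(P (a, b, c) * log (B b)) from ?_]
  rw [show (∑ a : β, ∑ b : γ, negMulLog (∑ c : δ, P (a, b, c)))
      = ∑ a : β, ∑ b : γ, ∑ c : δ, -(P (a, b, c) * log (A a b)) from ?_]
  rw [show (∑ b : γ, ∑ c : δ, negMulLog (∑ a : β, P (a, b, c)))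
      = ∑ a : β, ∑ b : γ, ∑ c : δ, -(P (a, b, c) * log (C b c)) from ?_]
  · refine le_trans h0T (le_of_eq ?_)
    simp only [← Finset.sum_sub_distrib, ← Finset.sum_add_distrib]
    refine Finset.sum_congr rfl fun a _ => Finset.sum_congr rfl fun b _ =>
      Finset.sum_congr rfl fun c _ => by ring
  · rw [← reorder fun a b c => -(P (a, b, c) * log (C b c))]
    exact Finset.sum_congr rfl fun b _ => Finset.sum_congr rfl fun c _ => expandC b c
  · exact Finset.sum_congr rfl fun a _ => Finset.sum_congr rfl fun b _ => expandA a b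
  · calc ∑ b : γ, negMulLog (∑ a : β, ∑ c : δ, P (a, b, c))
        = ∑ b : γ, ∑ a : β, ∑ c : δ, -(P (a, b, c) * log (B b)) :=
          Finset.sum_congr rfl fun b _ => expandB b
      _ = ∑ a : β, ∑ b : γ, ∑ c : δ, -(P (a, b, c) * log (B b)) := Finset.sum_comm


lemma entropyOf_submodular (p : Ω → ℝ) (hp : ∀ ω, 0 ≤ p ω) (hptot : ∑ ω, p ω = 1)
    (f : Ω → β) (g : Ω → γ) (h : Ω → δ) :
    entropyOf p (fun ω => (f ω, g ω, h ω)) + entropyOf p g ≤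
      entropyOf p (fun ω => (f ω, g ω)) + entropyOf p (fun ω => (g ω, h ω)) := by
  classical
  set P : β × γ × δ → ℝ :=
    fun x => ∑ ω ∈ univ.filter (fun ω => (f ω, g ω, h ω) = x), p ω with hP
  have hPnn : ∀ x, 0 ≤ P x := fun x => Finset.sum_nonneg fun ω _ => hp ω
  have hPsum : ∑ x, P x = 1 := by
    rw [hP, Finset.sum_fiberwise]
    exact hptot
  have margA : ∀ a b,
      (∑ ω ∈ univ.filter (fun ω => (f ω, g ω) = (a, b)), p ω) = ∑ c, P (a, b, c) := by
    intro a b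
    have hfil : ∀ c, univ.filter (fun ω => (f ω, g ω, h ω) = (a, b, c))
        = (univ.filter (fun ω => (f ω, g ω) = (a, b))).filter (fun ω => h ω = c) := by
      intro c
      ext ω
      simp only [mem_filter, mem_univ, true_and, Prod.mk.injEq]
      tauto
    refine Eq.symm ?_
    calc ∑ c, P (a, b, c)
        = ∑ c, ∑ ω ∈ (univ.filter (fun ω => (f ω, g ω) = (a, b))).filter
            (fun ω => h ω = c), p ω := by
          refine Finset.sum_congr rfl fun c _ => ?_
          rw [hP]
          dsimp only
          rw [hfil c]
      _ = ∑ ω ∈ univ.filter (fun ω => (f ω, g ω) = (a, b)), p ω :=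
          Finset.sum_fiberwise_of_maps_to (fun ω _ => mem_univ _) _
  have margC : ∀ b c,
      (∑ ω ∈ univ.filter (fun ω => (g ω, h ω) = (b, c)), p ω) = ∑ a, P (a, b, c) := by
    intro b c
    have hfil : ∀ a, univ.filter (fun ω => (f ω, g ω, h ω) = (a, b, c))
        = (univ.filter (fun ω => (g ω, h ω) = (b, c))).filter (fun ω => f ω = a) := by
      intro a
      ext ω
      simp only [mem_filter, mem_univ, true_and, Prod.mk.injEq]
      tauto
    refine Eq.symm ?_
    calc ∑ a, P (a, b, c)
        = ∑ a, ∑ ω ∈ (univ.filter (fun ω => (g ω, h ω) = (b, c))).filter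
            (fun ω => f ω = a), p ω := by
          refine Finset.sum_congr rfl fun a _ => ?_
          rw [hP]
          dsimp only
          rw [hfil a]
      _ = ∑ ω ∈ univ.filter (fun ω => (g ω, h ω) = (b, c)), p ω :=
          Finset.sum_fiberwise_of_maps_to (fun ω _ => mem_univ _) _
  have margB : ∀ b,
      (∑ ω ∈ univ.filter (fun ω => g ω = b), p ω) = ∑ a, ∑ c, P (a, b, c) := by
    intro b
    have hfil : ∀ (x : β × δ), univ.filter (fun ω => (f ω, g ω, h ω) = (x.1, b, x.2))
        = (univ.filter (fun ω => g ω = b)).filter (fun ω => (f ω, h ω) = x) := by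
      intro x
      ext ω
      simp only [mem_filter, mem_univ, true_and, Prod.mk.injEq, Prod.ext_iff]
      tauto
    refine Eq.symm ?_
    calc ∑ a, ∑ c, P (a, b, c)
        = ∑ x : β × δ, P (x.1, b, x.2) := by rw [Fintype.sum_prod_type]
      _ = ∑ x : β × δ, ∑ ω ∈ (univ.filter (fun ω => g ω = b)).filter
            (fun ω => (f ω, h ω) = x), p ω := by
          refine Finset.sum_congr rfl fun x _ => ?_
          rw [hP]
          dsimp only
          rw [hfil x]
      _ = ∑ ω ∈ univ.filter (fun ω => g ω = b), p ω :=
          Finset.sum_fiberwise_of_maps_to (fun ω _ => mem_univ _) _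
  have e1 : entropyOf p (fun ω => (f ω, g ω, h ω)) = ∑ x : β × γ × δ, negMulLog (P x) := by
    rw [entropyOf, hP]
  have e2 : entropyOf p (fun ω => (f ω, g ω))
      = ∑ a : β, ∑ b : γ, negMulLog (∑ c : δ, P (a, b, c)) := by
    rw [entropyOf, Fintype.sum_prod_type]
    exact Finset.sum_congr rfl fun a _ => Finset.sum_congr rfl fun b _ => by rw [margA a b]
  have e3 : entropyOf p g = ∑ b : γ, negMulLog (∑ a : β, ∑ c : δ, P (a, b, c)) := by
    rw [entropyOf]
    exact Finset.sum_congr rfl fun b _ => by rw [margB b]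
  have e4 : entropyOf p (fun ω => (g ω, h ω))
      = ∑ b : γ, ∑ c : δ, negMulLog (∑ a : β, P (a, b, c)) := by
    rw [entropyOf, Fintype.sum_prod_type]
    exact Finset.sum_congr rfl fun b _ => Finset.sum_congr rfl fun c _ => by rw [margC b c]
  rw [e1, e2, e3, e4]
  exact core_submodular P hPnn hPsum

end aux

lemma step_lemma (K : ℕ) (α : Fin K → Type*) [∀ i, Fintype (α i)] [∀ i, DecidableEq (α i)]
    (Ω : Type*) [Fintype Ω]
    (p : Ω → ℝ) (hp : ∀ ω, 0 ≤ p ω) (hptot : ∑ ω, p ω = 1)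
    (Y : (i : Fin K) → Ω → α i)
    (t : ℕ) (ht1 : 1 ≤ t) (ht2 : t + 1 ≤ K)
    (htK : t ≤ K) (ht1K : t - 1 ≤ K) :
    (∑ i : Fin K, entropyOf p (fun ω => fun j : Fin (t + 1) => Y (i + Fin.castLE ht2 j) ω))
      + (∑ i : Fin K, entropyOf p (fun ω => fun j : Fin (t - 1) => Y (i + Fin.castLE ht1K j) ω))
    ≤ 2 * ∑ i : Fin K, entropyOf p (fun ω => fun j : Fin t => Y (i + Fin.castLE htK j) ω) := by
  classical
  haveI : NeZero K := ⟨by omega⟩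
  -- index arithmetic helpers
  have hadd0 : ∀ i : Fin K, i + (⟨0, by omega⟩ : Fin K) = i := by
    intro i
    apply Fin.ext
    simp [Fin.add_def, Nat.mod_eq_of_lt i.isLt]
  have hadd1 : ∀ (i : Fin K) (m : ℕ) (hm : m + 1 < K),
      (i + 1) + (⟨m, by omega⟩ : Fin K) = i + ⟨m + 1, hm⟩ := by
    intro i m hm
    apply Fin.ext
    have h1K : (1 : ℕ) % K = 1 := Nat.mod_eq_of_lt (by omega)
    simp only [Fin.add_def, Fin.val_one', h1K, Nat.mod_add_mod]
    congr 1
    omega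
  -- the per-i inequality
  have key : ∀ i : Fin K,
      entropyOf p (fun ω => fun j : Fin (t + 1) => Y (i + Fin.castLE ht2 j) ω)
        + entropyOf p (fun ω => fun j : Fin (t - 1) => Y ((i + 1) + Fin.castLE ht1K j) ω)
      ≤ entropyOf p (fun ω => fun j : Fin t => Y (i + Fin.castLE htK j) ω)
        + entropyOf p (fun ω => fun j : Fin t => Y ((i + 1) + Fin.castLE htK j) ω) := by
    intro i
    have base := entropyOf_submodular p hp hptot
      (fun ω => Y i ω)
      (fun ω => fun j : Fin (t - 1) => Y ((i + 1) + Fin.castLE ht1K j) ω)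
      (fun ω => Y (i + Fin.castLE ht2 ⟨t, by omega⟩) ω)
    have c1 : entropyOf p (fun ω => (Y i ω,
        (fun j : Fin (t - 1) => Y ((i + 1) + Fin.castLE ht1K j) ω),
        Y (i + Fin.castLE ht2 ⟨t, by omega⟩) ω))
        = entropyOf p (fun ω => fun j : Fin (t + 1) => Y (i + Fin.castLE ht2 j) ω) := by
      apply entropyOf_congr
      intro ω ω'
      simp only [Prod.mk.injEq, funext_iff]
      constructor
      · rintro ⟨h1, h2, h3⟩ j
        by_cases hj0 : j.val = 0
        · rw [show j = ⟨0, by omega⟩ from Fin.ext hj0, show Fin.castLE ht2 (⟨0, by omega⟩ :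
            Fin (t + 1)) = ⟨0, by omega⟩ from rfl, hadd0]
          exact h1
        · by_cases hjt : j.val = t
          · rw [show j = ⟨t, by omega⟩ from Fin.ext hjt]
            exact h3
          · have hm : j.val - 1 < t - 1 := by omega
            have := h2 ⟨j.val - 1, hm⟩
            rw [show Fin.castLE ht1K (⟨j.val - 1, hm⟩ : Fin (t - 1)) = ⟨j.val - 1, by omega⟩
              from rfl, hadd1 i (j.val - 1) (by omega)] at this
            rw [show j = ⟨j.val - 1 + 1, by omega⟩ from Fin.ext (show j.val = j.val - 1 + 1 by omega)]
            exact this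
      · intro H
        refine ⟨?_, ?_, ?_⟩
        · have := H ⟨0, by omega⟩
          rwa [show Fin.castLE ht2 (⟨0, by omega⟩ : Fin (t + 1)) = ⟨0, by omega⟩ from rfl,
            hadd0] at this
        · intro j
          have := H ⟨j.val + 1, by omega⟩
          rw [show Fin.castLE ht2 (⟨j.val + 1, by omega⟩ : Fin (t + 1)) = ⟨j.val + 1, by omega⟩
            from rfl, ← hadd1 i j.val (by omega)] at this
          exact this
        · exact H ⟨t, by omega⟩
    have c2 : entropyOf p (fun ω => (Y i ω,
        (fun j : Fin (t - 1) => Y ((i + 1) + Fin.castLE ht1K j) ω)))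
        = entropyOf p (fun ω => fun j : Fin t => Y (i + Fin.castLE htK j) ω) := by
      apply entropyOf_congr
      intro ω ω'
      simp only [Prod.mk.injEq, funext_iff]
      constructor
      · rintro ⟨h1, h2⟩ j
        by_cases hj0 : j.val = 0
        · rw [show j = ⟨0, by omega⟩ from Fin.ext hj0, show Fin.castLE htK (⟨0, by omega⟩ :
            Fin t) = ⟨0, by omega⟩ from rfl, hadd0]
          exact h1
        · have hm : j.val - 1 < t - 1 := by omega
          have := h2 ⟨j.val - 1, hm⟩
          rw [show Fin.castLE ht1K (⟨j.val - 1, hm⟩ : Fin (t - 1)) = ⟨j.val - 1, by omega⟩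
            from rfl, hadd1 i (j.val - 1) (by omega)] at this
          rw [show j = ⟨j.val - 1 + 1, by omega⟩ from Fin.ext (show j.val = j.val - 1 + 1 by omega)]
          exact this
      · intro H
        refine ⟨?_, ?_⟩
        · have := H ⟨0, by omega⟩
          rwa [show Fin.castLE htK (⟨0, by omega⟩ : Fin t) = ⟨0, by omega⟩ from rfl,
            hadd0] at this
        · intro j
          have := H ⟨j.val + 1, by omega⟩
          rw [show Fin.castLE htK (⟨j.val + 1, by omega⟩ : Fin t) = ⟨j.val + 1, by omega⟩
            from rfl, ← hadd1 i j.val (by omega)] at this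
          exact this
    have c3 : entropyOf p (fun ω => (
        (fun j : Fin (t - 1) => Y ((i + 1) + Fin.castLE ht1K j) ω),
        Y (i + Fin.castLE ht2 ⟨t, by omega⟩) ω))
        = entropyOf p (fun ω => fun j : Fin t => Y ((i + 1) + Fin.castLE htK j) ω) := by
      apply entropyOf_congr
      intro ω ω'
      simp only [Prod.mk.injEq, funext_iff]
      constructor
      · rintro ⟨h1, h2⟩ j
        by_cases hjt : j.val = t - 1
        · rw [show j = ⟨t - 1, by omega⟩ from Fin.ext hjt, show Fin.castLE htK
            (⟨t - 1, by omega⟩ : Fin t) = ⟨t - 1, by omega⟩ from rfl,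
            hadd1 i (t - 1) (by omega)]
          rw [show (⟨t - 1 + 1, by omega⟩ : Fin K) = ⟨t, by omega⟩ from Fin.ext (show t - 1 + 1 = t by omega)]
          exact h2
        · exact h1 ⟨j.val, by omega⟩
      · intro H
        refine ⟨?_, ?_⟩
        · intro j
          exact H ⟨j.val, by omega⟩
        · have := H ⟨t - 1, by omega⟩
          rw [show Fin.castLE htK (⟨t - 1, by omega⟩ : Fin t) = ⟨t - 1, by omega⟩ from rfl,
            hadd1 i (t - 1) (by omega)] at this
          rw [show (⟨t - 1 + 1, by omega⟩ : Fin K) = Fin.castLE ht2 ⟨t, by omega⟩ from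
            Fin.ext (show t - 1 + 1 = t by omega)] at this
          exact this
    rw [c1, c2, c3] at base
    exact base
  -- sum over i and shift
  have shift : ∀ F : Fin K → ℝ, ∑ i : Fin K, F (i + 1) = ∑ i : Fin K, F i := by
    intro F
    exact Fintype.sum_equiv (Equiv.addRight 1) _ _ (fun i => rfl)
  have hsum := Finset.sum_le_sum (fun i (_ : i ∈ (univ : Finset (Fin K))) => key i)
  rw [Finset.sum_add_distrib, Finset.sum_add_distrib] at hsum
  rw [shift (fun i => entropyOf p (fun ω => fun j : Fin (t - 1) =>
    Y (i + Fin.castLE ht1K j) ω))] at hsum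
  rw [shift (fun i => entropyOf p (fun ω => fun j : Fin t =>
    Y (i + Fin.castLE htK j) ω))] at hsum
  linarith


/-- **Sliding-window subset entropy inequality.**
Given jointly distributed random variables `Y 0, …, Y (K-1)` (`K ≥ 2`) taking values in
finite sets (joint distribution described by the pmf `p` on a finite sample space `Ω`),
for every `s ∈ {1, …, K−1}`:
`(1/s) ∑_i H(Y_i, …, Y_{⟨i+s−1⟩}) ≥ (1/(s+1)) ∑_i H(Y_i, …, Y_{⟨i+s⟩})`,
where indices are understood cyclically modulo `K` (addition in `Fin K`). -/
theorem sliding_window_subset_entropy_inequality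
    (K : ℕ) (hK : 2 ≤ K)
    (α : Fin K → Type*) [∀ i, Fintype (α i)] [∀ i, DecidableEq (α i)]
    (Ω : Type*) [Fintype Ω]
    (p : Ω → ℝ) (hp : ∀ ω, 0 ≤ p ω) (hptot : ∑ ω, p ω = 1)
    (Y : (i : Fin K) → Ω → α i)
    (s : ℕ) (hs : 1 ≤ s) (hsK : s ≤ K - 1) :
    (1 / (s + 1) : ℝ) *
        ∑ i : Fin K, entropyOf p
          (fun ω => fun j : Fin (s + 1) => Y (i + Fin.castLE (by omega) j) ω)
      ≤ (1 / s : ℝ) *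
        ∑ i : Fin K, entropyOf p
          (fun ω => fun j : Fin s => Y (i + Fin.castLE (by omega) j) ω) := by
  classical
  set A : ℕ → ℝ := fun t =>
    if h : t ≤ K then
      ∑ i : Fin K, entropyOf p (fun ω => fun j : Fin t => Y (i + Fin.castLE h j) ω)
    else 0 with hA
  have hAeq : ∀ (t : ℕ) (h : t ≤ K), A t =
      ∑ i : Fin K, entropyOf p (fun ω => fun j : Fin t => Y (i + Fin.castLE h j) ω) := by
    intro t h
    rw [hA]
    exact dif_pos h
  have hA0 : A 0 = 0 := by
    rw [hAeq 0 (by omega)]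
    refine Finset.sum_eq_zero fun i _ => ?_
    haveI : Subsingleton ((j : Fin 0) → α (i + Fin.castLE (by omega) j)) :=
      ⟨fun a b => funext fun j => j.elim0⟩
    exact entropyOf_subsingleton p hptot _
  have stepA : ∀ t : ℕ, 1 ≤ t → t + 1 ≤ K → A (t + 1) + A (t - 1) ≤ 2 * A t := by
    intro t h1 h2
    rw [hAeq (t + 1) h2, hAeq (t - 1) (by omega), hAeq t (by omega)]
    exact step_lemma K α Ω p hp hptot Y t h1 h2 (by omega) (by omega)
  have main : ∀ n : ℕ, 1 ≤ n → n ≤ K - 1 → (n : ℝ) * A (n + 1) ≤ ((n : ℝ) + 1) * A n := by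
    intro n
    induction n with
    | zero => omega
    | succ m ih =>
      intro _ h2
      rcases Nat.eq_zero_or_pos m with hm | hm
      · subst hm
        have := stepA 1 le_rfl (by omega)
        rw [hA0] at this
        push_cast
        linarith
      · have ihm := ih (by omega) (by omega)
        have hst := stepA (m + 1) (by omega) (by omega)
        have : (m + 1 : ℕ) - 1 = m := by omega
        rw [this] at hst
        push_cast at ihm ⊢
        nlinarith [ihm, hst]
  have hfin := main s hs hsK
  have e1 : (∑ i : Fin K, entropyOf p
      (fun ω => fun j : Fin (s + 1) => Y (i + Fin.castLE (by omega : s + 1 ≤ K) j) ω))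
      = A (s + 1) := (hAeq (s + 1) (by omega)).symm
  have e2 : (∑ i : Fin K, entropyOf p
      (fun ω => fun j : Fin s => Y (i + Fin.castLE (by omega : s ≤ K) j) ω))
      = A s := (hAeq s (by omega)).symm
  rw [e1, e2]
  rw [div_mul_eq_mul_div, div_mul_eq_mul_div, one_mul, one_mul,
    div_le_div_iff₀ (by positivity) (by positivity)]
  nlinarith [hfin]
end

section
/- Let K ∈ ℕ+, let L ∈ ℕ+, let N_1, …, N_L and U_1, …, U_L be positive reals, and let M be a real with 0 ≤ M ≤ N_1 + ⋯ + N_L. Then there exists an M-feasible partition (H, I, J) of {1, …, L}; in particular its middle part I is nonempty. -/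
/-- `S_A = ∑_{i∈A} √(N_i U_i)`. -/
noncomputable def SA {L : ℕ} (N U : Fin L → ℝ) (A : Finset (Fin L)) : ℝ :=
  ∑ i ∈ A, Real.sqrt (N i * U i)

/-- `T_A = ∑_{j∈A} N_j`. -/
noncomputable def TA {L : ℕ} (N : Fin L → ℝ) (A : Finset (Fin L)) : ℝ :=
  ∑ j ∈ A, N j

/-- `V_A = ∑_{i∈A} N_i / K`. -/
noncomputable def VA (K : ℕ+) {L : ℕ} (N : Fin L → ℝ) (A : Finset (Fin L)) : ℝ :=
  ∑ i ∈ A, N i / (K : ℝ)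

/-- `M̃ = (M − T_J + V_I) / S_I`. -/
noncomputable def Mtilde (K : ℕ+) {L : ℕ} (N U : Fin L → ℝ) (M : ℝ)
    (I J : Finset (Fin L)) : ℝ :=
  (M - TA N J + VA K N I) / SA N U I

/-- `(H, I, J)` is an `M`-feasible partition of the set of levels `{1, …, L}`:
it is a partition with `I ≠ ∅` such that `M̃ < (1/K)√(N_h/U_h)` for `h ∈ H`,
`(1/K)√(N_i/U_i) ≤ M̃ ≤ (1 + 1/K)√(N_i/U_i)` for `i ∈ I`, and
`(1 + 1/K)√(N_j/U_j) < M̃` for `j ∈ J`. -/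
def MFeasible (K : ℕ+) {L : ℕ} (N U : Fin L → ℝ) (M : ℝ)
    (H I J : Finset (Fin L)) : Prop :=
  Disjoint H I ∧ Disjoint H J ∧ Disjoint I J ∧ H ∪ I ∪ J = Finset.univ ∧
  I.Nonempty ∧
  (∀ h ∈ H, Mtilde K N U M I J < (1 / (K : ℝ)) * Real.sqrt (N h / U h)) ∧
  (∀ i ∈ I, (1 / (K : ℝ)) * Real.sqrt (N i / U i) ≤ Mtilde K N U M I J ∧
      Mtilde K N U M I J ≤ (1 + 1 / (K : ℝ)) * Real.sqrt (N i / U i)) ∧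
  (∀ j ∈ J, (1 + 1 / (K : ℝ)) * Real.sqrt (N j / U j) < Mtilde K N U M I J)

/-- For every `K, L ∈ ℕ+`, positive reals `N_i, U_i`, and `0 ≤ M ≤ N_1 + ⋯ + N_L`,
an `M`-feasible partition `(H, I, J)` of `{1, …, L}` exists (in particular, its middle
part `I` is nonempty, as required by the definition of `M`-feasibility). -/
theorem mFeasible_exists (K L : ℕ+) (N U : Fin L → ℝ)
    (hN : ∀ i, 0 < N i) (hU : ∀ i, 0 < U i)
    (M : ℝ) (hM0 : 0 ≤ M) (hM1 : M ≤ ∑ i, N i) :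
    ∃ H I J : Finset (Fin L), MFeasible K N U M H I J := by
  classical
  haveI hne' : Nonempty (Fin L) := ⟨⟨0, L.pos⟩⟩
  have hk0 : (0:ℝ) < (K:ℝ) := by exact_mod_cast K.pos
  set r : Fin L → ℝ := fun i => Real.sqrt (N i / U i) with hrdef
  set s : Fin L → ℝ := fun i => Real.sqrt (N i * U i) with hsdef
  have hrw : ∀ i, Real.sqrt (N i / U i) = r i := fun i => by simp only [hrdef]
  have hr : ∀ i, 0 < r i := fun i => by
    simp only [hrdef]; exact Real.sqrt_pos.mpr (div_pos (hN i) (hU i))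
  have hs : ∀ i, 0 < s i := fun i => by
    simp only [hsdef]; exact Real.sqrt_pos.mpr (mul_pos (hN i) (hU i))
  have hrs : ∀ i, s i * r i = N i := by
    intro i
    simp only [hrdef, hsdef]
    rw [← Real.sqrt_mul (mul_pos (hN i) (hU i)).le]
    rw [show N i * U i * (N i / U i) = N i * N i * (U i / U i) from by ring,
      div_self (hU i).ne', mul_one, ← pow_two]
    exact Real.sqrt_sq (hN i).le
  have e1 : ∀ i, 1/(K:ℝ) * r i * s i = N i / (K:ℝ) := fun i => by
    linear_combination (1/(K:ℝ)) * hrs i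
  have e2 : ∀ i, (1+1/(K:ℝ)) * r i * s i = N i + N i / (K:ℝ) := fun i => by
    linear_combination (1+1/(K:ℝ)) * hrs i
  have hgap : ∀ i, 1/(K:ℝ) * r i + r i = (1+1/(K:ℝ)) * r i := fun i => by ring
  set g : Fin L → ℝ → ℝ := fun i t => max 0 (min (N i) (t * s i - N i / (K:ℝ))) with hgdef
  have gH : ∀ i t, t ≤ 1/(K:ℝ) * r i → g i t = 0 := by
    intro i t h
    have h2 : t * s i ≤ N i / (K:ℝ) := by
      calc t * s i ≤ 1/(K:ℝ) * r i * s i := mul_le_mul_of_nonneg_right h (hs i).le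
        _ = N i / (K:ℝ) := e1 i
    simp only [hgdef]
    exact max_eq_left (le_trans (min_le_right _ _) (by linarith))
  have gI : ∀ i t, 1/(K:ℝ) * r i ≤ t → t ≤ (1+1/(K:ℝ)) * r i →
      g i t = t * s i - N i / (K:ℝ) := by
    intro i t h1 h2
    have b1 : N i / (K:ℝ) ≤ t * s i := by
      calc N i / (K:ℝ) = 1/(K:ℝ) * r i * s i := (e1 i).symm
        _ ≤ t * s i := mul_le_mul_of_nonneg_right h1 (hs i).le
    have b2 : t * s i ≤ N i + N i / (K:ℝ) := by
      calc t * s i ≤ (1+1/(K:ℝ)) * r i * s i := mul_le_mul_of_nonneg_right h2 (hs i).le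
        _ = N i + N i / (K:ℝ) := e2 i
    have hNk : 0 ≤ N i / (K:ℝ) := (div_pos (hN i) hk0).le
    simp only [hgdef]
    rw [min_eq_right (by linarith), max_eq_right (by linarith)]
  have gJ : ∀ i t, (1+1/(K:ℝ)) * r i ≤ t → g i t = N i := by
    intro i t h
    have b : N i + N i / (K:ℝ) ≤ t * s i := by
      calc N i + N i / (K:ℝ) = (1+1/(K:ℝ)) * r i * s i := (e2 i).symm
        _ ≤ t * s i := mul_le_mul_of_nonneg_right h (hs i).le
    have hNk : 0 ≤ N i / (K:ℝ) := (div_pos (hN i) hk0).le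
    simp only [hgdef]
    rw [min_eq_left (by linarith), max_eq_right (hN i).le]
  set f : ℝ → ℝ := fun t => ∑ i, g i t with hfdef
  set Hs : ℝ → Finset (Fin L) :=
    fun t => Finset.univ.filter (fun i => t < 1/(K:ℝ) * r i) with hHdef
  set Is : ℝ → Finset (Fin L) :=
    fun t => Finset.univ.filter (fun i => 1/(K:ℝ) * r i ≤ t ∧ t ≤ (1+1/(K:ℝ)) * r i) with hIdef
  set Js : ℝ → Finset (Fin L) :=
    fun t => Finset.univ.filter (fun i => (1+1/(K:ℝ)) * r i < t) with hJdef
  have memH : ∀ t i, i ∈ Hs t ↔ t < 1/(K:ℝ) * r i := fun t i => by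
    simp [hHdef, Finset.mem_filter]
  have memI : ∀ t i, i ∈ Is t ↔ (1/(K:ℝ) * r i ≤ t ∧ t ≤ (1+1/(K:ℝ)) * r i) := fun t i => by
    simp [hIdef, Finset.mem_filter]
  have memJ : ∀ t i, i ∈ Js t ↔ (1+1/(K:ℝ)) * r i < t := fun t i => by
    simp [hJdef, Finset.mem_filter]
  have hcover : ∀ t i, i ∈ Hs t ∨ i ∈ Is t ∨ i ∈ Js t := by
    intro t i
    rw [memH, memI, memJ]
    by_cases h1 : t < 1/(K:ℝ) * r i
    · exact Or.inl h1
    · by_cases h2 : (1+1/(K:ℝ)) * r i < t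
      · exact Or.inr (Or.inr h2)
      · exact Or.inr (Or.inl ⟨by linarith, by linarith⟩)
  have SAeq : ∀ A : Finset (Fin L), SA N U A = ∑ i ∈ A, s i := fun A => by
    simp [SA, hsdef]
  have VAeq : ∀ A : Finset (Fin L), VA K N A = ∑ i ∈ A, N i / (K:ℝ) := fun A => rfl
  have TAeq : ∀ A : Finset (Fin L), TA N A = ∑ i ∈ A, N i := fun A => rfl
  have key : ∀ t, f t = M → (Is t).Nonempty →
      MFeasible K N U M (Hs t) (Is t) (Js t) := by
    intro t hft hI
    have dHI : Disjoint (Hs t) (Is t) := by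
      rw [Finset.disjoint_left]
      intro a ha hb
      rw [memH] at ha; rw [memI] at hb
      linarith [hb.1]
    have dHJ : Disjoint (Hs t) (Js t) := by
      rw [Finset.disjoint_left]
      intro a ha hb
      rw [memH] at ha; rw [memJ] at hb
      linarith [hr a, hgap a]
    have dIJ : Disjoint (Is t) (Js t) := by
      rw [Finset.disjoint_left]
      intro a ha hb
      rw [memI] at ha; rw [memJ] at hb
      linarith [ha.2]
    have hunion : Hs t ∪ Is t ∪ Js t = Finset.univ := by
      apply Finset.eq_univ_iff_forall.mpr
      intro i
      rcases hcover t i with h|h|h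
      · exact Finset.mem_union_left _ (Finset.mem_union_left _ h)
      · exact Finset.mem_union_left _ (Finset.mem_union_right _ h)
      · exact Finset.mem_union_right _ h
    have h1 : ∑ i ∈ Hs t, g i t = 0 :=
      Finset.sum_eq_zero (fun i hi => gH i t ((memH t i).mp hi).le)
    have h2 : ∑ i ∈ Is t, g i t = t * SA N U (Is t) - VA K N (Is t) := by
      rw [Finset.sum_congr rfl
        (fun i hi => gI i t ((memI t i).mp hi).1 ((memI t i).mp hi).2)]
      rw [SAeq, VAeq, Finset.mul_sum, ← Finset.sum_sub_distrib]
    have h3 : ∑ i ∈ Js t, g i t = TA N (Js t) := by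
      rw [TAeq]
      exact Finset.sum_congr rfl (fun i hi => gJ i t ((memJ t i).mp hi).le)
    have hd2 : Disjoint (Hs t ∪ Is t) (Js t) :=
      Finset.disjoint_union_left.mpr ⟨dHJ, dIJ⟩
    have hsplit : f t = ∑ i ∈ Hs t, g i t + ∑ i ∈ Is t, g i t + ∑ i ∈ Js t, g i t := by
      simp only [hfdef]
      rw [← hunion, Finset.sum_union hd2, Finset.sum_union dHI]
    have hsum : M - TA N (Js t) + VA K N (Is t) = t * SA N U (Is t) := by
      rw [← hft]; linarith [hsplit, h1, h2, h3]
    have hSA : 0 < SA N U (Is t) := by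
      rw [SAeq]; exact Finset.sum_pos (fun i _ => hs i) hI
    have hMt : Mtilde K N U M (Is t) (Js t) = t := by
      simp only [Mtilde]
      rw [hsum]
      field_simp
    refine ⟨dHI, dHJ, dIJ, hunion, hI, ?_, ?_, ?_⟩
    · intro h hh
      rw [hMt, hrw h]
      exact (memH t h).mp hh
    · intro i hi
      rw [hMt, hrw i]
      exact (memI t i).mp hi
    · intro j hj
      rw [hMt, hrw j]
      exact (memJ t j).mp hj
  have hneU : (Finset.univ : Finset (Fin L)).Nonempty := Finset.univ_nonempty
  set tmax := Finset.univ.sup' hneU (fun i => (1+1/(K:ℝ)) * r i) with htmdef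
  have htm_le : ∀ i, (1+1/(K:ℝ)) * r i ≤ tmax := fun i =>
    Finset.le_sup' (fun i => (1+1/(K:ℝ)) * r i) (Finset.mem_univ i)
  have i0 : Fin L := ⟨0, L.pos⟩
  have htm0 : 0 ≤ tmax := by
    have h1 : 0 < (1+1/(K:ℝ)) * r i0 := by
      have := hr i0
      have h2 : 0 < 1+1/(K:ℝ) := by positivity
      positivity
    linarith [htm_le i0]
  have hcont : Continuous f := by
    simp only [hfdef, hgdef]
    apply continuous_finset_sum
    intro i _
    fun_prop
  have hf0 : f 0 = 0 := by
    simp only [hfdef]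
    exact Finset.sum_eq_zero fun i _ =>
      gH i 0 (mul_pos (by positivity) (hr i)).le
  have hftmax : f tmax = ∑ i, N i := by
    simp only [hfdef]
    exact Finset.sum_congr rfl fun i _ => gJ i tmax (htm_le i)
  have hM' : M ∈ Set.Icc (f 0) (f tmax) := by
    rw [hf0, hftmax]; exact ⟨hM0, hM1⟩
  obtain ⟨t₀, ht₀mem, ht₀⟩ := intermediate_value_Icc htm0 hcont.continuousOn hM'
  by_cases hI0 : (Is t₀).Nonempty
  · exact ⟨_, _, _, key t₀ ht₀ hI0⟩
  · have hIempty : Is t₀ = ∅ := Finset.not_nonempty_iff_eq_empty.mp hI0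
    by_cases hJ0 : (Js t₀).Nonempty
    · obtain ⟨j, hjJ, hjmax⟩ :=
        Finset.exists_max_image (Js t₀) (fun i => (1+1/(K:ℝ)) * r i) hJ0
      have hjlt : (1+1/(K:ℝ)) * r j < t₀ := (memJ t₀ j).mp hjJ
      have hft1 : f ((1+1/(K:ℝ)) * r j) = M := by
        rw [← ht₀]
        simp only [hfdef]
        apply Finset.sum_congr rfl
        intro i _
        rcases hcover t₀ i with h|h|h
        · have h' := (memH t₀ i).mp h
          rw [gH i _ (by linarith), gH i t₀ h'.le]
        · rw [hIempty] at h; exact absurd h (Finset.notMem_empty i)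
        · have h' := (memJ t₀ i).mp h
          rw [gJ i _ (hjmax i h), gJ i t₀ h'.le]
      have hI1 : (Is ((1+1/(K:ℝ)) * r j)).Nonempty :=
        ⟨j, (memI _ j).mpr ⟨by linarith [hr j, hgap j], le_refl _⟩⟩
      exact ⟨_, _, _, key _ hft1 hI1⟩
    · have hJempty : Js t₀ = ∅ := Finset.not_nonempty_iff_eq_empty.mp hJ0
      have hMeq : M = 0 := by
        rw [← ht₀]
        simp only [hfdef]
        apply Finset.sum_eq_zero
        intro i _
        rcases hcover t₀ i with h|h|h
        · exact gH i t₀ ((memH t₀ i).mp h).le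
        · rw [hIempty] at h; exact absurd h (Finset.notMem_empty i)
        · rw [hJempty] at h; exact absurd h (Finset.notMem_empty i)
      obtain ⟨j, hjmem, hjmin⟩ :=
        Finset.exists_min_image Finset.univ (fun i => 1/(K:ℝ) * r i) hneU
      have hft1 : f (1/(K:ℝ) * r j) = M := by
        rw [hMeq]
        simp only [hfdef]
        exact Finset.sum_eq_zero fun i _ => gH i _ (hjmin i (Finset.mem_univ i))
      have hI1 : (Is (1/(K:ℝ) * r j)).Nonempty :=
        ⟨j, (memI _ j).mpr ⟨le_refl _, by linarith [hr j, hgap j]⟩⟩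
      exact ⟨_, _, _, key _ hft1 hI1⟩
end

section
/- Let K ∈ ℕ+, let N_1, …, N_L and U_1, …, U_L be positive reals, let M ≥ 0 be real, and let (H, I, J) be an M-feasible partition of {1, …, L}. Define the memory-sharing allocation m_1, …, m_L by m_h = 0 for h ∈ H, m_i = √(N_i U_i)·M̃ − N_i/K for i ∈ I, and m_j = N_j for j ∈ J, where M̃ = (M − T_J + V_I)/S_I. Then 0 ≤ m_i ≤ N_i for every level i, and Σ_{i=1}^{L} m_i = M. -/
/-- The memory-sharing allocation associated with an `M`-feasible partition `(H, I, J)`: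
`m_h = 0` for `h ∈ H`, `m_i = √(N_i U_i)·M̃ − N_i/K` for `i ∈ I`, `m_j = N_j` for `j ∈ J`. -/
noncomputable def msAlloc (K : ℕ+) {L : ℕ} (N U : Fin L → ℝ) (M : ℝ)
    (H I J : Finset (Fin L)) (i : Fin L) : ℝ :=
  if i ∈ H then 0
  else if i ∈ I then Real.sqrt (N i * U i) * Mtilde K N U M I J - N i / (K : ℝ)
  else N i

/-- For an `M`-feasible partition `(H, I, J)`, the memory-sharing allocation satisfies
`0 ≤ m_i ≤ N_i` for every level `i`, and `∑_i m_i = M`. -/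
theorem msAlloc_valid (K : ℕ+) (L : ℕ) (N U : Fin L → ℝ)
    (hN : ∀ i, 0 < N i) (hU : ∀ i, 0 < U i)
    (M : ℝ) (hM : 0 ≤ M)
    (H I J : Finset (Fin L)) (hfeas : MFeasible K N U M H I J) :
    (∀ i, 0 ≤ msAlloc K N U M H I J i ∧ msAlloc K N U M H I J i ≤ N i) ∧
    ∑ i, msAlloc K N U M H I J i = M := by
  obtain ⟨hHI, hHJ, hIJ, hcover, hne, hHb, hIb, hJb⟩ := hfeas
  have hK : (0:ℝ) < (K:ℝ) := by exact_mod_cast K.pos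
  have key : ∀ i : Fin L, Real.sqrt (N i * U i) * Real.sqrt (N i / U i) = N i := by
    intro i
    rw [← Real.sqrt_mul (le_of_lt (mul_pos (hN i) (hU i)))]
    have : N i * U i * (N i / U i) = (N i) ^ 2 := by
      field_simp [(hU i).ne']
    rw [this, Real.sqrt_sq (hN i).le]
  have hsqrt : ∀ i : Fin L, 0 < Real.sqrt (N i * U i) := fun i =>
    Real.sqrt_pos.mpr (mul_pos (hN i) (hU i))
  have hbound : ∀ i, 0 ≤ msAlloc K N U M H I J i ∧ msAlloc K N U M H I J i ≤ N i := by
    intro i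
    unfold msAlloc
    by_cases hiH : i ∈ H
    · simp [hiH, (hN i).le]
    · by_cases hiI : i ∈ I
      · simp only [hiH, if_false, hiI, if_true]
        obtain ⟨h1, h2⟩ := hIb i hiI
        have l1 : N i / (K:ℝ) ≤ Real.sqrt (N i * U i) * Mtilde K N U M I J := by
          calc N i / (K:ℝ) = Real.sqrt (N i * U i) * ((1 / (K:ℝ)) * Real.sqrt (N i / U i)) := by
                rw [show Real.sqrt (N i * U i) * ((1 / (K:ℝ)) * Real.sqrt (N i / U i))
                    = (Real.sqrt (N i * U i) * Real.sqrt (N i / U i)) * (1/(K:ℝ)) by ring,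
                  key i]; field_simp
            _ ≤ Real.sqrt (N i * U i) * Mtilde K N U M I J :=
                mul_le_mul_of_nonneg_left h1 (hsqrt i).le
        have l2 : Real.sqrt (N i * U i) * Mtilde K N U M I J ≤ N i + N i / (K:ℝ) := by
          calc Real.sqrt (N i * U i) * Mtilde K N U M I J
              ≤ Real.sqrt (N i * U i) * ((1 + 1 / (K:ℝ)) * Real.sqrt (N i / U i)) :=
                mul_le_mul_of_nonneg_left h2 (hsqrt i).le
            _ = N i + N i / (K:ℝ) := by
                rw [show Real.sqrt (N i * U i) * ((1 + 1 / (K:ℝ)) * Real.sqrt (N i / U i))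
                    = (Real.sqrt (N i * U i) * Real.sqrt (N i / U i)) * (1 + 1/(K:ℝ)) by ring,
                  key i]; field_simp
        constructor <;> linarith
      · simp [hiH, hiI, (hN i).le]
  refine ⟨hbound, ?_⟩
  have hSI : 0 < SA N U I := Finset.sum_pos (fun i _ => hsqrt i) hne
  have hsplit : (Finset.univ : Finset (Fin L)) = (H ∪ I) ∪ J := by rw [hcover]
  have hHIJ : Disjoint (H ∪ I) J := Finset.disjoint_union_left.mpr ⟨hHJ, hIJ⟩
  rw [hsplit, Finset.sum_union hHIJ, Finset.sum_union hHI]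
  have sH : ∑ i ∈ H, msAlloc K N U M H I J i = 0 :=
    Finset.sum_eq_zero (fun i hi => by simp [msAlloc, hi])
  have sI : ∑ i ∈ I, msAlloc K N U M H I J i
      = SA N U I * Mtilde K N U M I J - VA K N I := by
    rw [SA, VA, Finset.sum_mul, ← Finset.sum_sub_distrib]
    refine Finset.sum_congr rfl (fun i hi => ?_)
    have hiH : i ∉ H := Finset.disjoint_right.mp hHI hi
    simp [msAlloc, hiH, hi]
  have sJ : ∑ j ∈ J, msAlloc K N U M H I J j = TA N J := by
    rw [TA]
    refine Finset.sum_congr rfl (fun j hj => ?_)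
    have hjH : j ∉ H := Finset.disjoint_right.mp hHJ hj
    have hjI : j ∉ I := Finset.disjoint_right.mp hIJ hj
    simp [msAlloc, hjH, hjI]
  rw [sH, sI, sJ, Mtilde, mul_div_cancel₀ _ hSI.ne']
  ring
end

section
/- Consider the multi-user coded caching model with a single popularity level (L = 1) having N ∈ ℕ+ files, K ∈ ℕ+ caches, and U ∈ ℕ+ users per cache. For every real M with 0 ≤ M ≤ N, the pair (R^SL(M, K, N, U), M) is achievable, where R^SL(M, K, N, U) = U·min{N/M, K}·(1 − M/N) for 0 < M ≤ N and R^SL(0, K, N, U) = U·K. -/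
/-- A library: each level `i` has `N i` files, and each file is an arbitrary
element of `{0,1}^F`. -/
def MULibrary (L : ℕ) (N : Fin L → ℕ+) (F : ℕ) : Type :=
  (i : Fin L) → Fin (N i) → Fin F → Bool

/-- A demand vector of the multi-user setup: each of the `U i` users of level `i`
attached to cache `k` demands one file index of level `i`. -/
def MUDemand (L : ℕ) (N U : Fin L → ℕ+) (K : ℕ+) : Type :=
  (i : Fin L) → Fin K → Fin (U i) → Fin (N i)

/-- The pair `(R, M)` is achievable in the multi-user multi-level coded caching model
with `L` levels, `N i` files and `U i` users per cache for level `i`, and `K` caches: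
`R, M ≥ 0` and, for every `ε > 0`, there are a file size `F` and a scheme consisting of
placement maps `Z k` into a set of cardinality at most `2^(M·F)`, encoding maps `X d`
into a set of cardinality at most `2^((R+ε)·F)`, and decoding maps, such that every
user correctly recovers its demanded file for every library and every demand vector. -/
def MUAchievable (L : ℕ) (N U : Fin L → ℕ+) (K : ℕ+) (R M : ℝ) : Prop :=
  0 ≤ R ∧ 0 ≤ M ∧
  ∀ ε : ℝ, 0 < ε →
    ∃ (F : ℕ+) (zsize xsize : ℕ)
      (Z : Fin K → MULibrary L N F → Fin zsize)
      (X : MUDemand L N U K → MULibrary L N F → Fin xsize)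
      (dec : (i : Fin L) → Fin K → Fin (U i) → MUDemand L N U K →
        Fin xsize → Fin zsize → (Fin F → Bool)),
      (zsize : ℝ) ≤ (2 : ℝ) ^ (M * (F : ℝ)) ∧
      (xsize : ℝ) ≤ (2 : ℝ) ^ ((R + ε) * (F : ℝ)) ∧
      ∀ (w : MULibrary L N F) (d : MUDemand L N U K)
        (i : Fin L) (k : Fin K) (u : Fin (U i)),
        dec i k u d (X d w) (Z k w) = w i (d i k u)

/-- `R*(M)`: the optimal rate of the multi-user setup,
i.e. the infimum of the rates `R` such that `(R, M)` is achievable. -/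
noncomputable def RstarMU (L : ℕ) (N U : Fin L → ℕ+) (K : ℕ+) (M : ℝ) : ℝ :=
  sInf {R | MUAchievable L N U K R M}

/-- The single-level achievable rate
`R^SL(m, K, N, U) = U · min{N/m, K} · (1 − m/N)` for `0 < m ≤ N`, and
`R^SL(0, K, N, U) = U · K`. -/
noncomputable def RSL (m : ℝ) (K : ℕ+) (N U : ℝ) : ℝ :=
  if m = 0 then U * (K : ℝ) else U * min (N / m) (K : ℝ) * (1 - m / N)

/-!
Each of the `U` users of a cache is served in its own round, round `u` delivering to the `u`-th
user of every cache with the Maddah-Ali–Niesen scheme. For an integer `t ≤ K` this scheme splits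
every file into subfiles `W_{f,T}`, `T` a `t`-set of caches, lets cache `k` store the subfiles
with `k ∈ T`, and sends `∑_{j ∈ S} W_{d_j, S ∖ {j}}` for every `(t+1)`-set `S`: memory `tN/K`,
rate `U(K-t)/(t+1)`. With `x = KM/N` and `t ≤ x ≤ t+1`, sharing memory between the schemes for
`t` and `t+1` meets memory `M`, and the resulting rate, linear in `x` between the two points,
lies below `U(K-x)/max x 1 = R^SL(M)`. Splitting the files in a rational ratio just above the
real one keeps the memory within `M` at an arbitrarily small cost in rate.
-/

open Finset

theorem Fintype.card_finset_len_mem_mul_card {α : Type*} [Fintype α] [DecidableEq α]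
    (t : ℕ) (a : α) :
    Fintype.card {T : Finset α // T.card = t ∧ a ∈ T} * Fintype.card α
      = (Fintype.card α).choose t * t := by
  rcases t with _ | s
  · simp only [card_eq_zero_iff, mul_zero, mul_eq_zero]
    exact Or.inl ⟨fun ⟨T, hT, ha⟩ => notMem_empty a (Finset.card_eq_zero.mp hT ▸ ha)⟩
  have hfilter : (univ.filter fun T : Finset α => T.card = s + 1 ∧ a ∈ T)
      = (univ.powersetCard (s + 1)).filter ({a} ⊆ ·) := by
    ext T
    simp [mem_powersetCard]
  obtain ⟨n, hn⟩ := Nat.exists_eq_add_one_of_ne_zero (Fintype.card_pos_iff.mpr ⟨a⟩).ne'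
  rw [Fintype.card_subtype, hfilter, card_filter_powersetCard_subset _ _ _ (subset_univ _)
    (by simp), card_univ, card_singleton, hn, Nat.add_sub_cancel, Nat.add_sub_cancel,
    mul_comm, Nat.add_one_mul_choose_eq]

noncomputable def finsetLenEquivFin (K t : ℕ) :
    {T : Finset (Fin K) // T.card = t} ≃ Fin (K.choose t) :=
  Fintype.equivFinOfCardEq (by rw [Fintype.card_finset_len, Fintype.card_fin])

theorem natCast_two_pow_le_two_rpow {n : ℕ} {x : ℝ} (h : (n : ℝ) ≤ x) :
    ((2 ^ n : ℕ) : ℝ) ≤ 2 ^ x := by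
  rw [Nat.cast_pow, Nat.cast_ofNat, ← Real.rpow_natCast]
  exact Real.rpow_le_rpow_of_exponent_le one_le_two h

theorem exists_nat_ratio_mem_Icc {a δ : ℝ} (ha0 : 0 ≤ a) (ha1 : a ≤ 1) (hδ : 0 < δ) :
    ∃ p q : ℕ, 0 < q ∧ p ≤ q ∧ a * q ≤ p ∧ (p : ℝ) ≤ (a + δ) * q := by
  have hq : δ⁻¹ ≤ ⌈δ⁻¹⌉₊ := Nat.le_ceil _
  have hq0 : (0 : ℝ) < ⌈δ⁻¹⌉₊ := (inv_pos.mpr hδ).trans_le hq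
  have hδq : 1 ≤ δ * ⌈δ⁻¹⌉₊ := by rwa [← div_le_iff₀' hδ, one_div]
  refine ⟨⌈a * ⌈δ⁻¹⌉₊⌉₊, ⌈δ⁻¹⌉₊, by exact_mod_cast hq0, Nat.ceil_le.mpr ?_, Nat.le_ceil _, ?_⟩
  · nlinarith
  · linarith [Nat.ceil_lt_add_one (mul_nonneg ha0 hq0.le)]

theorem exists_nat_le_le_add_one {x : ℝ} {K : ℕ} (hx0 : 0 ≤ x) (hxK : x ≤ K) (hK : 0 < K) :
    ∃ t : ℕ, t + 1 ≤ K ∧ (t : ℝ) ≤ x ∧ x ≤ t + 1 := by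
  rcases hxK.lt_or_eq with hlt | rfl
  · exact ⟨⌊x⌋₊, (Nat.floor_lt hx0).mpr hlt, Nat.floor_le hx0, (Nat.lt_floor_add_one x).le⟩
  · refine ⟨K - 1, by omega, ?_, ?_⟩ <;> push_cast [Nat.cast_sub hK] <;> linarith

section CodedDelivery

variable {κ ν A : Type*} [DecidableEq κ] [AddCommGroup A]

def manTransmission (W : ν → Finset κ → A) (d : κ → ν) (S : Finset κ) : A :=
  ∑ j ∈ S, W (d j) (S.erase j)

theorem manTransmission_insert_sub_sum (W : ν → Finset κ → A) (d : κ → ν) {k : κ}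
    {T : Finset κ} (hk : k ∉ T) :
    manTransmission W d (insert k T) - ∑ j ∈ T, W (d j) ((insert k T).erase j) = W (d k) T := by
  rw [manTransmission, sum_insert hk, erase_insert hk, add_sub_cancel_right]

def manRecover (c : Finset κ → ν → A) (m : Finset κ → A) (d : κ → ν) (k : κ)
    (T : Finset κ) : A :=
  if k ∈ T then c T (d k) else m (insert k T) - ∑ j ∈ T, c ((insert k T).erase j) (d j)

theorem manRecover_eq {W : ν → Finset κ → A} {c : Finset κ → ν → A} {m : Finset κ → A}
    {d : κ → ν} {k : κ} {t : ℕ} (hc : ∀ T, T.card = t → k ∈ T → ∀ f, c T f = W f T)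
    (hm : ∀ S, S.card = t + 1 → m S = manTransmission W d S) {T : Finset κ} (hT : T.card = t) :
    manRecover c m d k T = W (d k) T := by
  unfold manRecover
  split_ifs with hk
  · exact hc T hT hk _
  have hc' (j) (hj : j ∈ T) : c ((insert k T).erase j) (d j) = W (d j) ((insert k T).erase j) :=
    hc _ (by rw [card_erase_of_mem (mem_insert_of_mem hj), card_insert_of_notMem hk, hT]; rfl)
      (mem_erase.mpr ⟨fun h => hk (h ▸ hj), mem_insert_self k T⟩) _
  rw [hm _ (by rw [card_insert_of_notMem hk, hT]), sum_congr rfl hc',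
    manTransmission_insert_sub_sum W d hk]

end CodedDelivery

section Schemes

variable {L : ℕ} {N U : Fin L → ℕ+} {K : ℕ+}

def MULibrary.comap {F F' : ℕ} (ι : Fin F' → Fin F) (w : MULibrary L N F) :
    MULibrary L N F' :=
  fun i f b => w i f (ι b)

/-- A scheme with arbitrary finite alphabets, possibly a different one for each cache; only
their sizes matter (`muAchievable_iff`). -/
structure CachingScheme (L : ℕ) (N U : Fin L → ℕ+) (K : ℕ+) (F : ℕ) where
  Cache : Fin K → Type
  Msg : Type
  [cacheFintype : ∀ k, Fintype (Cache k)]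
  [msgFintype : Fintype Msg]
  place : (k : Fin K) → MULibrary L N F → Cache k
  encode : MUDemand L N U K → MULibrary L N F → Msg
  decode : (i : Fin L) → (k : Fin K) → Fin (U i) → MUDemand L N U K → Msg → Cache k →
    Fin F → Bool
  decode_encode_place : ∀ w d i k u, decode i k u d (encode d w) (place k w) = w i (d i k u)

attribute [instance] CachingScheme.cacheFintype CachingScheme.msgFintype

namespace CachingScheme

variable {F F₁ F₂ : ℕ}

/-- `m` and `r` are total numbers of bits, i.e. `M * F` and `R * F`. -/
def FitsIn (S : CachingScheme L N U K F) (m r : ℝ) : Prop :=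
  (∀ k, (Fintype.card (S.Cache k) : ℝ) ≤ 2 ^ m) ∧ (Fintype.card S.Msg : ℝ) ≤ 2 ^ r

def append (S₁ : CachingScheme L N U K F₁) (S₂ : CachingScheme L N U K F₂) :
    CachingScheme L N U K (F₁ + F₂) where
  Cache k := S₁.Cache k × S₂.Cache k
  Msg := S₁.Msg × S₂.Msg
  place k w := (S₁.place k (w.comap (Fin.castAdd F₂)), S₂.place k (w.comap (Fin.natAdd F₁)))
  encode d w := (S₁.encode d (w.comap (Fin.castAdd F₂)), S₂.encode d (w.comap (Fin.natAdd F₁)))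
  decode i k u d m c := Fin.append (S₁.decode i k u d m.1 c.1) (S₂.decode i k u d m.2 c.2)
  decode_encode_place w d i k u := by
    simp only [decode_encode_place]
    exact Fin.append_castAdd_natAdd

def pow (S : CachingScheme L N U K F) (n : ℕ) : CachingScheme L N U K (n * F) where
  Cache k := Fin n → S.Cache k
  Msg := Fin n → S.Msg
  place k w c := S.place k (w.comap fun b => finProdFinEquiv (c, b))
  encode d w c := S.encode d (w.comap fun b => finProdFinEquiv (c, b))
  decode i k u d m z b :=
    S.decode i k u d (m (finProdFinEquiv.symm b).1) (z (finProdFinEquiv.symm b).1)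
      (finProdFinEquiv.symm b).2
  decode_encode_place w d i k u := by
    funext b
    simp only [decode_encode_place, MULibrary.comap, Prod.mk.eta, Equiv.apply_symm_apply]

theorem FitsIn.mono {S : CachingScheme L N U K F} {m r m' r' : ℝ} (h : S.FitsIn m r)
    (hm : m ≤ m') (hr : r ≤ r') : S.FitsIn m' r' :=
  ⟨fun k => (h.1 k).trans (Real.rpow_le_rpow_of_exponent_le one_le_two hm),
    h.2.trans (Real.rpow_le_rpow_of_exponent_le one_le_two hr)⟩

theorem FitsIn.append {S₁ : CachingScheme L N U K F₁} {S₂ : CachingScheme L N U K F₂}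
    {m₁ r₁ m₂ r₂ : ℝ} (h₁ : S₁.FitsIn m₁ r₁) (h₂ : S₂.FitsIn m₂ r₂) :
    (S₁.append S₂).FitsIn (m₁ + m₂) (r₁ + r₂) := by
  refine ⟨fun k => ?_, ?_⟩
  · change ((Fintype.card (S₁.Cache k × S₂.Cache k) : ℕ) : ℝ) ≤ _
    rw [Fintype.card_prod, Nat.cast_mul, Real.rpow_add two_pos]
    exact mul_le_mul (h₁.1 k) (h₂.1 k) (by positivity) (by positivity)
  · change ((Fintype.card (S₁.Msg × S₂.Msg) : ℕ) : ℝ) ≤ _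
    rw [Fintype.card_prod, Nat.cast_mul, Real.rpow_add two_pos]
    exact mul_le_mul h₁.2 h₂.2 (by positivity) (by positivity)

theorem FitsIn.pow {S : CachingScheme L N U K F} {m r : ℝ} (h : S.FitsIn m r) (n : ℕ) :
    (S.pow n).FitsIn (n * m) (n * r) := by
  refine ⟨fun k => ?_, ?_⟩
  · change ((Fintype.card (Fin n → S.Cache k) : ℕ) : ℝ) ≤ _
    rw [Fintype.card_fun, Fintype.card_fin, Nat.cast_pow, mul_comm,
      Real.rpow_mul_natCast zero_le_two]
    exact pow_le_pow_left₀ (by positivity) (h.1 k) n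
  · change ((Fintype.card (Fin n → S.Msg) : ℕ) : ℝ) ≤ _
    rw [Fintype.card_fun, Fintype.card_fin, Nat.cast_pow, mul_comm,
      Real.rpow_mul_natCast zero_le_two]
    exact pow_le_pow_left₀ (by positivity) h.2 n

end CachingScheme

theorem muAchievable_iff {R M : ℝ} :
    MUAchievable L N U K R M ↔ 0 ≤ R ∧ 0 ≤ M ∧ ∀ ε : ℝ, 0 < ε →
      ∃ F : ℕ, 0 < F ∧ ∃ S : CachingScheme L N U K F, S.FitsIn (M * F) ((R + ε) * F) := by
  refine and_congr_right fun _ => and_congr_right fun _ => forall₂_congr fun ε _ => ?_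
  constructor
  · rintro ⟨F, zsize, xsize, Z, X, dec, hz, hx, hdec⟩
    exact ⟨F, F.pos, ⟨fun _ => Fin zsize, Fin xsize, Z, X, dec, hdec⟩,
      fun _ => by simpa using hz, by simpa using hx⟩
  · rintro ⟨F, hF, S, hcache, hmsg⟩
    have hle (k : Fin K) : Fintype.card (S.Cache k) ≤ ⌊(2 : ℝ) ^ (M * F)⌋₊ :=
      Nat.le_floor (hcache k)
    let emb (k : Fin K) : S.Cache k ↪ Fin ⌊(2 : ℝ) ^ (M * F)⌋₊ :=
      (Fintype.equivFin _).toEmbedding.trans (Fin.castLEEmb (hle k))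
    have (k : Fin K) : Nonempty (S.Cache k) := ⟨S.place k fun _ _ _ => false⟩
    refine ⟨⟨F, hF⟩, _, Fintype.card S.Msg, fun k w => emb k (S.place k w),
      fun d w => Fintype.equivFin _ (S.encode d w),
      fun i k u d x z => S.decode i k u d ((Fintype.equivFin _).symm x)
        (Function.invFun (emb k) z),
      Nat.floor_le (by positivity), hmsg, fun w d i k u => ?_⟩
    simp only [Equiv.symm_apply_apply, Function.leftInverse_invFun (emb k).injective _]
    exact S.decode_encode_place w d i k u

theorem MUAchievable.of_rate_le {R R' M : ℝ} (h : MUAchievable L N U K R M) (hR : R ≤ R') :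
    MUAchievable L N U K R' M := by
  obtain ⟨hR0, hM0, h⟩ := h
  refine ⟨hR0.trans hR, hM0, fun ε hε => ?_⟩
  obtain ⟨F, zsize, xsize, Z, X, dec, hz, hx, hdec⟩ := h ε hε
  exact ⟨F, zsize, xsize, Z, X, dec, hz,
    hx.trans (Real.rpow_le_rpow_of_exponent_le one_le_two (by gcongr)), hdec⟩

theorem MUAchievable.memory_sharing {R₁ M₁ R₂ M₂ a : ℝ} (h₁ : MUAchievable L N U K R₁ M₁)
    (h₂ : MUAchievable L N U K R₂ M₂) (hM : M₁ ≤ M₂) (ha0 : 0 ≤ a) (ha1 : a ≤ 1) :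
    MUAchievable L N U K (a * R₁ + (1 - a) * R₂) (a * M₁ + (1 - a) * M₂) := by
  rw [muAchievable_iff] at h₁ h₂ ⊢
  obtain ⟨hR₁, hM₁, h₁⟩ := h₁
  obtain ⟨hR₂, hM₂, h₂⟩ := h₂
  have ha1' : 0 ≤ 1 - a := sub_nonneg.mpr ha1
  refine ⟨by positivity, by positivity, fun ε hε => ?_⟩
  obtain ⟨F₁, hF₁, S₁, hS₁⟩ := h₁ (ε / 2) (half_pos hε)
  obtain ⟨F₂, hF₂, S₂, hS₂⟩ := h₂ (ε / 2) (half_pos hε)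
  -- `p / q ≥ a` is the share of the lower-memory scheme, rounded up so that memory stays below
  -- the target; the rounding costs at most `ε / 2` in rate.
  obtain ⟨p, q, hq, hpq, hap, hpa⟩ :=
    exists_nat_ratio_mem_Icc ha0 ha1 (δ := ε / (2 * (|R₁ - R₂| + 1))) (by positivity)
  have hF : p * F₂ * F₁ + (q - p) * F₁ * F₂ = q * (F₁ * F₂) := by
    rw [mul_right_comm p, ← add_mul, ← add_mul, Nat.add_sub_cancel' hpq, mul_assoc]
  refine ⟨_, hF ▸ by positivity, (S₁.pow (p * F₂)).append (S₂.pow ((q - p) * F₁)),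
    ((hS₁.pow _).append (hS₂.pow _)).mono ?_ ?_⟩ <;>
  rw [hF] <;> push_cast [Nat.cast_sub hpq]
  · have : 0 ≤ ((F₁ : ℝ) * F₂) * ((p - a * q) * (M₂ - M₁)) :=
      mul_nonneg (by positivity) (mul_nonneg (sub_nonneg.mpr hap) (sub_nonneg.mpr hM))
    nlinarith
  · have hdev : (p - a * q) * (R₁ - R₂) ≤ q * (ε / 2) := by
      have hround : (p - a * q) * (|R₁ - R₂| + 1) ≤ q * (ε / 2) :=
        calc _ ≤ ε / (2 * (|R₁ - R₂| + 1)) * q * (|R₁ - R₂| + 1) := by gcongr; linarith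
          _ = q * (ε / 2) := by field_simp
      nlinarith [le_abs_self (R₁ - R₂), sub_nonneg.mpr hap]
    have : 0 ≤ ((F₁ : ℝ) * F₂) * (q * (ε / 2) - (p - a * q) * (R₁ - R₂)) :=
      mul_nonneg (by positivity) (sub_nonneg.mpr hdev)
    nlinarith

end Schemes

section MAN

variable (N K U : ℕ+)

/-- `W_{f,T}` is bit `finsetLenEquivFin K t T` of file `f`, and `0` unless `#T = t`. -/
noncomputable def manSubfile (t : ℕ) (w : MULibrary 1 (fun _ => N) ((K : ℕ).choose t))
    (f : Fin N) : Finset (Fin K) → ZMod 2 :=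
  Function.extend Subtype.val (fun T => finTwoEquiv.symm (w 0 f (finsetLenEquivFin K t T))) 0

theorem manSubfile_val (t : ℕ) (w : MULibrary 1 (fun _ => N) ((K : ℕ).choose t)) (f : Fin N)
    (T : {T : Finset (Fin K) // T.card = t}) :
    manSubfile N K t w f T = finTwoEquiv.symm (w 0 f (finsetLenEquivFin K t T)) :=
  Subtype.val_injective.extend_apply _ _ T

noncomputable def manScheme (t : ℕ) :
    CachingScheme 1 (fun _ => N) (fun _ => U) K ((K : ℕ).choose t) where
  Cache k := {T : Finset (Fin K) // T.card = t ∧ k ∈ T} → Fin N → ZMod 2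
  Msg := Fin U → {S : Finset (Fin K) // S.card = t + 1} → ZMod 2
  place _ w T f := manSubfile N K t w f T
  encode d w u S := manTransmission (manSubfile N K t w) (fun j => d 0 j u) S
  decode _ k u d m c b := finTwoEquiv
    (manRecover (Function.extend Subtype.val c 0) (Function.extend Subtype.val (m u) 0)
      (fun j => d 0 j u) k ((finsetLenEquivFin K t).symm b) : ZMod 2)
  decode_encode_place w d i k u := by
    obtain rfl := Subsingleton.elim i 0
    funext b
    rw [manRecover_eq (W := manSubfile N K t w) (t := t)
        (fun T hT hk f => congrFun (Subtype.val_injective.extend_apply _ _ ⟨T, hT, hk⟩) f)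
        (fun S hS => Subtype.val_injective.extend_apply _ _ ⟨S, hS⟩)
        ((finsetLenEquivFin K t).symm b).2,
      manSubfile_val, Equiv.apply_symm_apply, Equiv.apply_symm_apply]

theorem manScheme_fitsIn {t : ℕ} (ht : t ≤ K) :
    (manScheme N K U t).FitsIn (t * N / K * (K : ℕ).choose t)
      (U * (K - t) / (t + 1) * (K : ℕ).choose t) := by
  have hK : (0 : ℝ) < K := by positivity
  refine ⟨fun k => ?_, ?_⟩
  · change ((Fintype.card ({T : Finset (Fin K) // T.card = t ∧ k ∈ T} → Fin N → ZMod 2) : ℕ)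
      : ℝ) ≤ _
    rw [Fintype.card_fun, Fintype.card_fun, ZMod.card, Fintype.card_fin, ← pow_mul]
    refine natCast_two_pow_le_two_rpow (le_of_eq ?_)
    have hcount := Fintype.card_finset_len_mem_mul_card t k
    rw [Fintype.card_fin] at hcount
    rw [div_mul_eq_mul_div, eq_div_iff hK.ne']
    push_cast
    linear_combination (N : ℝ) * (by exact_mod_cast hcount :
      (Fintype.card {T : Finset (Fin K) // T.card = t ∧ k ∈ T} : ℝ) * K = (K : ℕ).choose t * t)
  · change ((Fintype.card (Fin U → {S : Finset (Fin K) // S.card = t + 1} → ZMod 2) : ℕ)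
      : ℝ) ≤ _
    rw [Fintype.card_fun, Fintype.card_fun, ZMod.card, Fintype.card_finset_len,
      Fintype.card_fin, Fintype.card_fin, ← pow_mul]
    refine natCast_two_pow_le_two_rpow (le_of_eq ?_)
    have hchoose : ((K : ℕ).choose (t + 1) : ℝ) * (t + 1) = (K : ℕ).choose t * (K - t) := by
      rw [← Nat.cast_sub ht]
      exact_mod_cast Nat.choose_succ_right_eq K t
    rw [div_mul_eq_mul_div, eq_div_iff (by positivity)]
    push_cast
    linear_combination (U : ℝ) * hchoose

theorem muAchievable_man {t : ℕ} (ht : t ≤ K) :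
    MUAchievable 1 (fun _ => N) (fun _ => U) K (U * (K - t) / (t + 1)) (t * N / K) := by
  have hKt : (0 : ℝ) ≤ K - t := sub_nonneg.mpr (by exact_mod_cast ht)
  refine muAchievable_iff.mpr ⟨by positivity, by positivity, fun ε hε =>
    ⟨_, Nat.choose_pos ht, manScheme N K U t, (manScheme_fitsIn N K U ht).mono le_rfl ?_⟩⟩
  gcongr
  linarith

end MAN

theorem man_chord_le_div_max {K x : ℝ} {t : ℕ} (htx : t ≤ x) (hxt : x ≤ t + 1)
    (htK : t + 1 ≤ K) :
    (t + 1 - x) * ((K - t) / (t + 1)) + (x - t) * ((K - (t + 1)) / (t + 1 + 1))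
      ≤ (K - x) / max x 1 := by
  rcases Nat.eq_zero_or_pos t with rfl | ht
  · push_cast at *
    rw [max_eq_right (by linarith), div_one]
    nlinarith
  have hx1 : 1 ≤ x := le_trans (by exact_mod_cast ht) htx
  have hsum : (t + 1 - x) * ((K - t) / (t + 1)) + (x - t) * ((K - (t + 1)) / (t + 1 + 1))
      = ((t + 1 - x) * (K - t) * (t + 2) + (x - t) * (K - t - 1) * (t + 1))
        / ((t + 1) * (t + 2)) := by
    field_simp
    ring
  rw [max_eq_left hx1, hsum, div_le_div_iff₀ (by positivity) (by positivity)]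
  nlinarith [sq_nonneg (x - t - 1), mul_nonneg (by positivity : (0 : ℝ) ≤ t + 1)
    (sub_nonneg.mpr htK)]

theorem RSL_eq_div_max {M N U : ℝ} (K : ℕ+) (hM : 0 ≤ M) (hN : 0 < N) :
    RSL M K N U = U * (K - K * M / N) / max (K * M / N) 1 := by
  unfold RSL
  split_ifs with h
  · simp [h]
  have hM' : 0 < M := lt_of_le_of_ne hM (Ne.symm h)
  have hK : (0 : ℝ) < K := by positivity
  rcases le_total (K * M / N) 1 with hx | hx
  · rw [div_le_one hN] at hx
    rw [max_eq_right (by rwa [div_le_one hN]), min_eq_right (by rwa [le_div_iff₀ hM'])]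
    field_simp
  · rw [one_le_div hN] at hx
    rw [max_eq_left (by rwa [one_le_div hN]), min_eq_left (by rwa [div_le_iff₀ hM'])]
    field_simp

/-- In the multi-user coded caching model with a single popularity level (`L = 1`),
`N` files, `K` caches and `U` users per cache, for every `0 ≤ M ≤ N` the pair
`(R^SL(M, K, N, U), M)` is achievable. -/
theorem single_level_rate_achievable (N K U : ℕ+) (M : ℝ)
    (hM0 : 0 ≤ M) (hMN : M ≤ ((N : ℕ) : ℝ)) :
    MUAchievable 1 (fun _ => N) (fun _ => U) K
      (RSL M K ((N : ℕ) : ℝ) ((U : ℕ) : ℝ)) M := by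
  have hN : (0 : ℝ) < N := by positivity
  set x : ℝ := K * M / N with hx
  obtain ⟨t, htK, htx, hxt⟩ := exists_nat_le_le_add_one (x := x) (K := K) (by positivity)
    (by rw [hx, div_le_iff₀ hN]; gcongr) K.pos
  have hshare := (muAchievable_man N K U (t := t) (by omega)).memory_sharing
    (muAchievable_man N K U htK) (by gcongr; linarith) (a := t + 1 - x)
    (by linarith) (by linarith)
  have hmem : (t + 1 - x) * (t * N / K) + (1 - (t + 1 - x)) * (((t + 1 : ℕ) : ℝ) * N / K)
      = M := by
    rw [hx]; push_cast; field_simp; ring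
  rw [hmem] at hshare
  refine hshare.of_rate_le ?_
  rw [RSL_eq_div_max K hM0 hN, ← hx]
  have hchord := man_chord_le_div_max htx hxt (K := K) (by exact_mod_cast htK)
  push_cast
  calc _ = (U : ℝ) * ((t + 1 - x) * ((K - t) / (t + 1))
        + (x - t) * ((K - (t + 1)) / (t + 1 + 1))) := by ring
    _ ≤ U * ((K - x) / max x 1) := by gcongr
    _ = _ := by ring
end

section
/- Let M and N be reals with 1/6 ≤ M ≤ N/6. Then ⌈N/(6M)⌉ · ( min{ 1 , N/(⌈N/(6M)⌉·⌈6M⌉) } − M/⌈6M⌉ ) ≥ N/(72·M). -/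
/-- For reals `1/6 ≤ M ≤ N/6`:
`⌈N/(6M)⌉ · (min{1, N/(⌈N/(6M)⌉·⌈6M⌉)} − M/⌈6M⌉) ≥ N/(72·M)`. -/
theorem vi_lower_bound (M N : ℝ) (hM : 1 / 6 ≤ M) (hMN : M ≤ N / 6) :
    (⌈N / (6 * M)⌉ : ℝ) *
        (min 1 (N / ((⌈N / (6 * M)⌉ : ℝ) * (⌈6 * M⌉ : ℝ))) - M / (⌈6 * M⌉ : ℝ))
      ≥ N / (72 * M) := by
  have hM0 : (0:ℝ) < M := by linarith
  have h6M : (1:ℝ) ≤ 6 * M := by linarith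
  have hN : 6 * M ≤ N := by linarith
  have hN1 : (1:ℝ) ≤ N := by linarith
  set k : ℝ := (⌈N / (6 * M)⌉ : ℝ) with hk
  set m : ℝ := (⌈6 * M⌉ : ℝ) with hm
  have hkge : N / (6 * M) ≤ k := Int.le_ceil _
  have hklt : k < N / (6 * M) + 1 := Int.ceil_lt_add_one _
  have hmge : 6 * M ≤ m := Int.le_ceil _
  have hmlt : m < 6 * M + 1 := Int.ceil_lt_add_one _
  have hq1 : (1:ℝ) ≤ N / (6*M) := (one_le_div (by linarith)).mpr hN
  have hk1 : (1:ℝ) ≤ k := le_trans hq1 hkge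
  have hm1 : (1:ℝ) ≤ m := le_trans h6M hmge
  have hk0 : (0:ℝ) < k := by linarith
  have hm0 : (0:ℝ) < m := by linarith
  have hNkm : N ≤ k * m := by
    have h1 := mul_le_mul hkge hmge (by linarith) (by linarith)
    have hd : N / (6*M) * (6*M) = N := div_mul_cancel₀ _ (by positivity)
    linarith
  have hmin : min 1 (N / (k * m)) = N / (k * m) := by
    rw [min_eq_right]
    exact (div_le_one (by positivity)).mpr hNkm
  rw [hmin]
  have hid1 : N / (6*M) * M = N / 6 := by field_simp
  have hkM : k * M < N / 3 := by nlinarith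
  have hm12 : m < 12 * M := by linarith
  have hid2 : N / (72*M) * (12*M) = N / 6 := by field_simp; ring
  have hpos : (0:ℝ) ≤ N / (72*M) := by positivity
  have key : k * (N / (k * m) - M / m) = (N - k * M) / m := by
    field_simp
  rw [ge_iff_le, key, le_div_iff₀ hm0]
  nlinarith [mul_le_mul_of_nonneg_left hm12.le hpos]
end

section
/- Let M and N be reals with M ≥ 1/6 and M < N/6. Then (N − ⌈N/(6M)⌉·M)/⌈6M⌉ ≥ N/(18·M). -/
/-- For reals `M ≥ 1/6` and `M < N/6`:
`(N − ⌈N/(6M)⌉·M)/⌈6M⌉ ≥ N/(18·M)`. -/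
theorem vj_lower_bound_small_M (M N : ℝ) (hM : 1 / 6 ≤ M) (hMN : M < N / 6) :
    (N - (⌈N / (6 * M)⌉ : ℝ) * M) / (⌈6 * M⌉ : ℝ) ≥ N / (18 * M) := by
  have hM0 : 0 < M := by linarith
  have hN : 0 < N := by linarith
  have hc : (⌈N / (6 * M)⌉ : ℝ) ≤ N / (6 * M) + 1 :=
    le_of_lt (Int.ceil_lt_add_one _)
  have hD1 : (1 : ℝ) ≤ (⌈6 * M⌉ : ℝ) := le_trans (by linarith) (Int.le_ceil _)
  have hD : (⌈6 * M⌉ : ℝ) ≤ 12 * M :=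
    le_trans (le_of_lt (Int.ceil_lt_add_one _)) (by linarith)
  have hnum : 2 * N / 3 ≤ N - (⌈N / (6 * M)⌉ : ℝ) * M := by
    have h1 : (⌈N / (6 * M)⌉ : ℝ) * M ≤ (N / (6 * M) + 1) * M :=
      mul_le_mul_of_nonneg_right hc hM0.le
    have h2 : (N / (6 * M) + 1) * M = N / 6 + M := by
      field_simp
    nlinarith
  rw [ge_iff_le, div_le_div_iff₀ (by positivity) (by linarith)]
  nlinarith [mul_le_mul_of_nonneg_left hD hN.le,
    mul_le_mul_of_nonneg_right hnum (by linarith : (0:ℝ) ≤ 18 * M)]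
end

section
/- For every real r ≥ 0, setting N_1 = 2^{5r}, N_2 = 2^{8r}, U_1 = 2^{4r}, U_2 = 2^{r}, one has (N_1 + N_2)·(U_1 + U_2) ≥ (2^{3r}/4) · ( √(N_1·U_1) + √(N_2·U_2) )². In particular, the clustering rate expression (N_1+N_2)(U_1+U_2)/M exceeds the memory-sharing rate expression (√(N_1U_1)+√(N_2U_2))²/M by a factor of at least 2^{3r}/4, which is unbounded as r → ∞. -/
/-- With `N₁ = 2^{5r}`, `N₂ = 2^{8r}`, `U₁ = 2^{4r}`, `U₂ = 2^{r}` for `r ≥ 0`, the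
clustering rate numerator `(N₁+N₂)(U₁+U₂)` exceeds the memory-sharing rate numerator
`(√(N₁U₁)+√(N₂U₂))²` by a factor of at least `2^{3r}/4` (unbounded as `r → ∞`). -/
theorem clustering_vs_memory_sharing_gap (r : ℝ) (hr : 0 ≤ r) :
    ((2 : ℝ) ^ (5 * r) + (2 : ℝ) ^ (8 * r)) * ((2 : ℝ) ^ (4 * r) + (2 : ℝ) ^ r)
      ≥ ((2 : ℝ) ^ (3 * r) / 4) *
        (Real.sqrt ((2 : ℝ) ^ (5 * r) * (2 : ℝ) ^ (4 * r))
          + Real.sqrt ((2 : ℝ) ^ (8 * r) * (2 : ℝ) ^ r)) ^ 2 := by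
  have h2 : (0:ℝ) < 2 := two_pos
  have e1 : (2:ℝ)^(5*r)*(2:ℝ)^(4*r) = (2:ℝ)^(9*r) := by
    rw [← Real.rpow_add h2]; ring_nf
  have e2 : (2:ℝ)^(8*r)*(2:ℝ)^r = (2:ℝ)^(9*r) := by
    rw [← Real.rpow_add h2]; ring_nf
  have hs : Real.sqrt ((2:ℝ)^(9*r)) = (2:ℝ)^(9*r/2) := by
    rw [Real.sqrt_eq_rpow, ← Real.rpow_mul (le_of_lt h2)]; ring_nf
  rw [e1, e2, hs]
  have key : ((2 : ℝ) ^ (3 * r) / 4) * ((2:ℝ)^(9*r/2) + (2:ℝ)^(9*r/2))^2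
      = (2:ℝ)^(12*r) := by
    have : ((2:ℝ)^(9*r/2))^2 = (2:ℝ)^(9*r) := by
      rw [← Real.rpow_natCast ((2:ℝ)^(9*r/2)) 2, ← Real.rpow_mul (le_of_lt h2)]
      norm_num
    have h3 : (2:ℝ)^(3*r) * (2:ℝ)^(9*r) = (2:ℝ)^(12*r) := by
      rw [← Real.rpow_add h2]; ring_nf
    linear_combination (2:ℝ)^(3*r) * this + h3
  rw [key]
  have p1 : (0:ℝ) < (2:ℝ)^(9*r) := Real.rpow_pos_of_pos h2 _
  have p2 : (0:ℝ) < (2:ℝ)^(6*r) := Real.rpow_pos_of_pos h2 _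
  have e3 : (2:ℝ)^(5*r)*(2:ℝ)^r = (2:ℝ)^(6*r) := by
    rw [← Real.rpow_add h2]; ring_nf
  have e4 : (2:ℝ)^(8*r)*(2:ℝ)^(4*r) = (2:ℝ)^(12*r) := by
    rw [← Real.rpow_add h2]; ring_nf
  nlinarith [p1, p2, e1, e2, e3, e4]
end
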